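/- Let A and B be n×n real symmetric matrices and let 0 < r ≤ 2. Then Σ_{k=1}^n |λ_k(A+B)|^r ≤ 8 ( Σ_{k=1}^n |λ_k(A)|^r + Σ_{k=1}^n |λ_k(B)|^r ); equivalently, ∫_ℝ |t|^r dμ_{A+B}(t) ≤ 8 ( ∫_ℝ |t|^r dμ_A(t) + ∫_ℝ |t|^r dμ_B(t) ), where μ_M denotes the empirical spectral measure of M. -/

import Mathlib

open scoped ENNReal

/-!
If `A + B` had more than `#{λ(A) > s} + #{λ(B) > t}` eigenvalues above `s + t`, a dimension count
would give a nonzero vector `v` on which the quadratic form of `A + B` exceeds `(s + t)‖v‖²` while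
those of `A` and `B` are at most `s‖v‖²` and `t‖v‖²`. Applied to `±A, ±B` with `s = t = x / 2`,
this bounds the counting function of `|λ(A + B)|` at `x` by those of `2|λ(A)|` and `2|λ(B)|`.
The layer-cake formula `∑ f^r = r ∫₀^∞ t^(r-1) #{f > t} dt` turns this into
`∑ |λ(A + B)|^r ≤ 2^r (∑ |λ(A)|^r + ∑ |λ(B)|^r)`, and `2^r ≤ 4` for `r ≤ 2`.
-/

open Finset Module MeasureTheory
open scoped RealInnerProductSpace

namespace OrthonormalBasis

variable {ι E : Type*} [Fintype ι] [NormedAddCommGroup E] [InnerProductSpace ℝ E]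

theorem sum_mul_inner_sq_le (b : OrthonormalBasis ι ℝ E) {α : ι → ℝ} {s : ℝ} {v : E}
    (hv : ∀ i, s < α i → ⟪b i, v⟫ = 0) : ∑ i, α i * ⟪b i, v⟫ ^ 2 ≤ s * ‖v‖ ^ 2 := by
  rw [← b.sum_sq_inner_right, mul_sum]
  refine sum_le_sum fun i _ => ?_
  rcases le_or_gt (α i) s with hi | hi
  · exact mul_le_mul_of_nonneg_right hi (sq_nonneg _)
  · simp [hv i hi]

theorem lt_sum_mul_inner_sq (b : OrthonormalBasis ι ℝ E) {α : ι → ℝ} {s : ℝ} {v : E}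
    (hv0 : v ≠ 0) (hv : ∀ i, α i ≤ s → ⟪b i, v⟫ = 0) :
    s * ‖v‖ ^ 2 < ∑ i, α i * ⟪b i, v⟫ ^ 2 := by
  obtain ⟨j, hj⟩ : ∃ j, ⟪b j, v⟫ ≠ 0 := by
    by_contra! h
    exact hv0 (b.toBasis.ext_elem fun i => by simpa [b.repr_apply_apply] using h i)
  rw [← b.sum_sq_inner_right, mul_sum]
  refine sum_lt_sum (fun i _ => ?_) ⟨j, mem_univ j, ?_⟩
  · rcases le_or_gt (α i) s with hi | hi
    · simp [hv i hi]
    · exact mul_le_mul_of_nonneg_right hi.le (sq_nonneg _)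
  · exact mul_lt_mul_of_pos_right (not_le.mp fun h => hj (hv j h)) (by positivity)

theorem card_add_lt_le_of_sum_mul_inner_sq_eq (a b c : OrthonormalBasis ι ℝ E)
    {α β γ : ι → ℝ}
    (h : ∀ v, ∑ i, γ i * ⟪c i, v⟫ ^ 2 = ∑ i, α i * ⟪a i, v⟫ ^ 2 + ∑ i, β i * ⟪b i, v⟫ ^ 2)
    (s t : ℝ) : #{i | s + t < γ i} ≤ #{i | s < α i} + #{i | t < β i} := by
  by_contra! hcard
  have := Module.Finite.of_basis a.toBasis
  let L : E →ₗ[ℝ] ({i // γ i ≤ s + t} → ℝ) × ({i // s < α i} → ℝ) × ({i // t < β i} → ℝ) :=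
    (LinearMap.pi fun i : {i // γ i ≤ s + t} => innerₛₗ ℝ (c i)).prod <|
      (LinearMap.pi fun i : {i // s < α i} => innerₛₗ ℝ (a i)).prod
        (LinearMap.pi fun i : {i // t < β i} => innerₛₗ ℝ (b i))
  have hsplit := card_filter_add_card_filter_not (s := univ) (fun i => s + t < γ i)
  obtain ⟨v, hvL, hv0⟩ := Submodule.exists_mem_ne_zero_of_ne_bot <|
    LinearMap.ker_ne_bot_of_finrank_lt (f := L) <| by
      simp only [finrank_prod, finrank_fintype_fun_eq_card, Fintype.card_subtype,
        finrank_eq_card_basis a.toBasis, not_lt, card_univ] at hsplit ⊢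
      omega
  simp only [LinearMap.ker_prod, Submodule.mem_inf, LinearMap.mem_ker, funext_iff,
    LinearMap.pi_apply, innerₛₗ_apply_apply, Pi.zero_apply, Subtype.forall, L] at hvL
  obtain ⟨hvc, hva, hvb⟩ := hvL
  linarith [h v, c.lt_sum_mul_inner_sq hv0 hvc, a.sum_mul_inner_sq_le hva,
    b.sum_mul_inner_sq_le hvb]

end OrthonormalBasis

theorem Finset.card_lt_abs_eq {ι : Type*} [Fintype ι] (f : ι → ℝ) {s : ℝ} (hs : 0 ≤ s) :
    #{i | s < |f i|} = #{i | s < f i} + #{i | s < -f i} := by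
  classical
  rw [← card_union_of_disjoint (disjoint_filter.mpr fun i _ h₁ h₂ => by linarith), ← filter_or]
  simp only [lt_abs]

namespace Matrix.IsHermitian

variable {ι : Type*} [Fintype ι] [DecidableEq ι] {A B : Matrix ι ι ℝ}

theorem toEuclideanLin_eigenvectorBasis (hA : A.IsHermitian) (i : ι) :
    A.toEuclideanLin (hA.eigenvectorBasis i) = hA.eigenvalues i • hA.eigenvectorBasis i := by
  ext1
  simp [hA.mulVec_eigenvectorBasis]

theorem inner_toEuclideanLin_self (hA : A.IsHermitian) (v : EuclideanSpace ℝ ι) :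
    ⟪v, A.toEuclideanLin v⟫ = ∑ i, hA.eigenvalues i * ⟪hA.eigenvectorBasis i, v⟫ ^ 2 := by
  rw [← hA.eigenvectorBasis.sum_inner_mul_inner]
  refine sum_congr rfl fun i _ => ?_
  rw [← isSymmetric_toEuclideanLin_iff.mpr hA, hA.toEuclideanLin_eigenvectorBasis,
    real_inner_smul_left, real_inner_comm]
  ring

theorem card_lt_abs_eigenvalues_add_le (hA : A.IsHermitian) (hB : B.IsHermitian)
    (hAB : (A + B).IsHermitian) {s t : ℝ} (hs : 0 ≤ s) (ht : 0 ≤ t) :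
    #{i | s + t < |hAB.eigenvalues i|} ≤
      #{i | s < |hA.eigenvalues i|} + #{i | t < |hB.eigenvalues i|} := by
  have hq (v : EuclideanSpace ℝ ι) :
      ∑ i, hAB.eigenvalues i * ⟪hAB.eigenvectorBasis i, v⟫ ^ 2 =
        ∑ i, hA.eigenvalues i * ⟪hA.eigenvectorBasis i, v⟫ ^ 2 +
          ∑ i, hB.eigenvalues i * ⟪hB.eigenvectorBasis i, v⟫ ^ 2 := by
    simp only [← inner_toEuclideanLin_self, map_add, LinearMap.add_apply, inner_add_right]
  have hq_neg (v : EuclideanSpace ℝ ι) :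
      ∑ i, -hAB.eigenvalues i * ⟪hAB.eigenvectorBasis i, v⟫ ^ 2 =
        ∑ i, -hA.eigenvalues i * ⟪hA.eigenvectorBasis i, v⟫ ^ 2 +
          ∑ i, -hB.eigenvalues i * ⟪hB.eigenvectorBasis i, v⟫ ^ 2 := by
    simp only [neg_mul, sum_neg_distrib, hq v, neg_add]
  have hpos := OrthonormalBasis.card_add_lt_le_of_sum_mul_inner_sq_eq _ _ _ hq s t
  have hneg := OrthonormalBasis.card_add_lt_le_of_sum_mul_inner_sq_eq _ _ _ hq_neg s t
  rw [card_lt_abs_eq _ (add_nonneg hs ht), card_lt_abs_eq _ hs, card_lt_abs_eq _ ht]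
  omega

end Matrix.IsHermitian

section LayerCake

variable {ι : Type*} [Fintype ι] {r : ℝ}

theorem ofReal_sum_rpow_eq_lintegral_card {f : ι → ℝ} (hf : 0 ≤ f) (hr : 0 < r) :
    ENNReal.ofReal (∑ i, f i ^ r) =
      ENNReal.ofReal r * ∫⁻ t in Set.Ioi 0, #{i | t < f i} * ENNReal.ofReal (t ^ (r - 1)) := by
  let _ : MeasurableSpace ι := ⊤
  have _ : DiscreteMeasurableSpace ι := ⟨fun _ => trivial⟩
  rw [ENNReal.ofReal_sum_of_nonneg fun i _ => Real.rpow_nonneg (hf i) r,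
    ← tsum_fintype (L := SummationFilter.unconditional ι), ← lintegral_count,
    lintegral_rpow_eq_lintegral_meas_lt_mul _ (ae_of_all _ hf)
      (measurable_of_countable f).aemeasurable hr]
  simp_rw [← coe_filter_univ, Measure.count_apply_finset]

theorem sum_rpow_le_add_of_card_lt_le {f g h : ι → ℝ} (hf : 0 ≤ f) (hg : 0 ≤ g) (hh : 0 ≤ h)
    (hcard : ∀ t > 0, #{i | t < f i} ≤ #{i | t < g i} + #{i | t < h i}) (hr : 0 < r) :
    ∑ i, f i ^ r ≤ ∑ i, g i ^ r + ∑ i, h i ^ r := by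
  have hsum_nonneg (u : ι → ℝ) (hu : 0 ≤ u) : 0 ≤ ∑ i, u i ^ r :=
    sum_nonneg fun i _ => Real.rpow_nonneg (hu i) r
  have hanti : Antitone fun t : ℝ => (#{i | t < g i} : ℝ≥0∞) := fun s t hst => by
    dsimp only
    exact_mod_cast card_le_card <|
      monotone_filter_right univ fun i _ (hi : t < g i) => hst.trans_lt hi
  have hmeas : Measurable fun t : ℝ => (#{i | t < g i} : ℝ≥0∞) * ENNReal.ofReal (t ^ (r - 1)) :=
    hanti.measurable.mul (by fun_prop)
  rw [← ENNReal.ofReal_le_ofReal_iff (add_nonneg (hsum_nonneg g hg) (hsum_nonneg h hh)),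
    ENNReal.ofReal_add (hsum_nonneg g hg) (hsum_nonneg h hh),
    ofReal_sum_rpow_eq_lintegral_card hf hr, ofReal_sum_rpow_eq_lintegral_card hg hr,
    ofReal_sum_rpow_eq_lintegral_card hh hr, ← mul_add, ← lintegral_add_left hmeas]
  refine mul_le_mul_right (setLIntegral_mono' measurableSet_Ioi fun t ht => ?_) _
  rw [← add_mul]
  gcongr
  exact_mod_cast hcard t ht

end LayerCake

/-- **Schatten-type quasi-norm inequality for sums of symmetric matrices** (used in the proof of
Lemma `lemma:tightness` of the paper): for real symmetric `n × n` matrices `A` and `B` and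
`0 < r ≤ 2`, `∑_k |λ_k(A+B)|^r ≤ 8 (∑_k |λ_k(A)|^r + ∑_k |λ_k(B)|^r)`. -/
theorem sum_abs_rpow_eigenvalues_add_le
    {n : ℕ} (A B : Matrix (Fin n) (Fin n) ℝ)
    (hA : A.IsHermitian) (hB : B.IsHermitian) (hAB : (A + B).IsHermitian)
    (r : ℝ) (hr0 : 0 < r) (hr2 : r ≤ 2) :
    ∑ k, |hAB.eigenvalues k| ^ r ≤
      8 * ((∑ k, |hA.eigenvalues k| ^ r) + ∑ k, |hB.eigenvalues k| ^ r) := by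
  have hcard : ∀ t > 0, #{k | t < |hAB.eigenvalues k|} ≤
      #{k | t < 2 * |hA.eigenvalues k|} + #{k | t < 2 * |hB.eigenvalues k|} := fun t ht => by
    simpa only [add_halves, div_lt_iff₀' (two_pos : (0 : ℝ) < 2)] using
      hA.card_lt_abs_eigenvalues_add_le hB hAB (half_pos ht).le (half_pos ht).le
  have h2r : (2 : ℝ) ^ r ≤ 8 := by
    have := Real.rpow_le_rpow_of_exponent_le one_le_two hr2
    rw [Real.rpow_two] at this
    linarith
  calc ∑ k, |hAB.eigenvalues k| ^ r
      ≤ ∑ k, (2 * |hA.eigenvalues k|) ^ r + ∑ k, (2 * |hB.eigenvalues k|) ^ r :=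
        sum_rpow_le_add_of_card_lt_le (fun _ => abs_nonneg _) (fun _ => by positivity)
          (fun _ => by positivity) hcard hr0
    _ = 2 ^ r * ((∑ k, |hA.eigenvalues k| ^ r) + ∑ k, |hB.eigenvalues k| ^ r) := by
        simp only [Real.mul_rpow zero_le_two (abs_nonneg _), ← mul_sum, mul_add]
    _ ≤ 8 * ((∑ k, |hA.eigenvalues k| ^ r) + ∑ k, |hB.eigenvalues k| ^ r) := by
        gcongr
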